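/- arXiv:math/0204105 — 2 statements merged into one kernel-verified Lean document; each statement's English description precedes it below -/
import Mathlib

section
/- Let γ ≠ 0, r, φ ∈ ℝ with r² + γ² = 1, and define the curve c(t) = (x(t), y(t), z(t)) by x(t) = (r/2γ)(sin(2γt+φ) - sin φ), y(t) = (r/2γ)(cos φ - cos(2γt+φ)), z(t) = ((1+γ²)/(2γ)) t - ((1-γ²)/(4γ²)) sin(2γt). Then c(0) = (0,0,0), and the derivatives satisfy x'(t) = α(t), y'(t) = β(t), z'(t) = γ - α(t) y(t) + β(t) x(t), where α(t) = r cos(2γt+φ), β(t) = r sin(2γt+φ). -/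
/-! The planar part (x, y) runs around a circle of radius r / (2γ) with velocity (α, β), so only
the vertical equation has content. There the twist term −αy + βx collapses, by the cosine
difference formula, to (r² / 2γ)(1 − cos 2γt), and r² = 1 − γ² turns γ plus this into z'. -/

open Real

lemma one_sub_cos_sub_eq (θ φ : ℝ) :
    1 - cos (θ - φ) = cos θ * (cos θ - cos φ) + sin θ * (sin θ - sin φ) := by
  rw [cos_sub]
  linear_combination (sin_sq_add_cos_sq θ).symm

lemma sub_cos_mul_add_sin_mul_eq (c k a θ φ : ℝ) :
    c - k * cos θ * (k / a * (cos φ - cos θ)) + k * sin θ * (k / a * (sin θ - sin φ)) =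
      c + k ^ 2 / a * (1 - cos (θ - φ)) := by
  rw [one_sub_cos_sub_eq]
  ring

lemma hasDerivAt_affine (a b t : ℝ) : HasDerivAt (fun t => a * t + b) a t := by
  simpa using ((hasDerivAt_id t).const_mul a).add_const b

lemma hasDerivAt_div_mul_sin_affine_sub {a : ℝ} (ha : a ≠ 0) (k b c t : ℝ) :
    HasDerivAt (fun t => k / a * (sin (a * t + b) - c)) (k * cos (a * t + b)) t :=
  (((hasDerivAt_affine a b t).sin.sub_const c).const_mul (k / a)).congr_deriv (by field_simp)

lemma hasDerivAt_div_mul_sub_cos_affine {a : ℝ} (ha : a ≠ 0) (k b c t : ℝ) :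
    HasDerivAt (fun t => k / a * (c - cos (a * t + b))) (k * sin (a * t + b)) t :=
  (((hasDerivAt_affine a b t).cos.const_sub c).const_mul (k / a)).congr_deriv (by field_simp)

lemma hasDerivAt_mul_sub_mul_sin_mul (p q a t : ℝ) :
    HasDerivAt (fun t => p * t - q * sin (a * t)) (p - q * (cos (a * t) * a)) t :=
  (((hasDerivAt_id' t).const_mul p).sub
    (((hasDerivAt_id' t).const_mul a).sin.const_mul q)).congr_deriv (by ring)

/-- The explicit Heisenberg geodesic through 0 with γ ≠ 0 satisfies c(0) = 0 and the
    first-order system x' = α, y' = β, z' = γ − αy + βx. -/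
theorem heis_geodesic_equations (γ r φ : ℝ) (hγ : γ ≠ 0) (hunit : r ^ 2 + γ ^ 2 = 1) :
    let x : ℝ → ℝ := fun t => r / (2 * γ) * (Real.sin (2 * γ * t + φ) - Real.sin φ)
    let y : ℝ → ℝ := fun t => r / (2 * γ) * (Real.cos φ - Real.cos (2 * γ * t + φ))
    let z : ℝ → ℝ := fun t =>
      (1 + γ ^ 2) / (2 * γ) * t - (1 - γ ^ 2) / (4 * γ ^ 2) * Real.sin (2 * γ * t)
    let α : ℝ → ℝ := fun t => r * Real.cos (2 * γ * t + φ)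
    let β : ℝ → ℝ := fun t => r * Real.sin (2 * γ * t + φ)
    x 0 = 0 ∧ y 0 = 0 ∧ z 0 = 0 ∧
    ∀ t : ℝ, deriv x t = α t ∧ deriv y t = β t ∧
      deriv z t = γ - α t * y t + β t * x t := by
  intro x y z α β
  have h2γ : 2 * γ ≠ 0 := mul_ne_zero two_ne_zero hγ
  refine ⟨by simp [x], by simp [y], by simp [z], fun t => ⟨?_, ?_, ?_⟩⟩
  · exact (hasDerivAt_div_mul_sin_affine_sub h2γ r φ (sin φ) t).deriv
  · exact (hasDerivAt_div_mul_sub_cos_affine h2γ r φ (cos φ) t).deriv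
  · rw [(hasDerivAt_mul_sub_mul_sin_mul _ _ (2 * γ) t).deriv]
    simp only [α, β, x, y]
    rw [sub_cos_mul_add_sin_mul_eq, add_sub_cancel_right]
    generalize cos (2 * γ * t) = C
    field_simp
    linear_combination (-4 * (1 - C)) * hunit
end

section
/- For the curve c(t) = ((r/2γ)(sin(2γt+φ) - sin φ), (r/2γ)(cos φ - cos(2γt+φ)), ((1+γ²)/(2γ))t - ((1-γ²)/(4γ²)) sin(2γt)) with r² + γ² = 1 and γ ≠ 0, the velocity c'(t) has unit length in the left-invariant metric, i.e., writing c'(t) = αX + βY + γ̃T in the frame X=(1,0,-y), Y=(0,1,x), T=(0,0,1) at c(t), one has α² + β² + γ̃² = 1 for all t. -/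
/-!
Along the curve the angle `θ = 2γt + φ` turns uniformly and `(x', y') = r (cos θ, sin θ)`,
so `α² + β² = r²`. The vertical component is constant: `y x' - x y' = r²/(2γ) (cos (θ - φ) - 1)`
exactly cancels the oscillating part of `z'`, leaving `γ̃ = γ`, and `r² + γ² = 1` finishes.
-/

open Real

lemma chord_cross_cos_sin (θ φ : ℝ) :
    (cos φ - cos (θ + φ)) * cos (θ + φ) - (sin (θ + φ) - sin φ) * sin (θ + φ) = cos θ - 1 := by
  have h := cos_sub (θ + φ) φ
  rw [add_sub_cancel_right] at h
  linear_combination -h - sin_sq_add_cos_sq (θ + φ)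

section HeisenbergGeodesic

variable (γ r φ : ℝ)

lemma hasDerivAt_geodesic_x (hγ : γ ≠ 0) (t : ℝ) :
    HasDerivAt (fun t => r / (2 * γ) * (sin (2 * γ * t + φ) - sin φ))
      (r * cos (2 * γ * t + φ)) t := by
  have hθ : HasDerivAt (fun t => 2 * γ * t + φ) (2 * γ) t := (hasDerivAt_const_mul _).add_const φ
  refine ((hθ.sin.sub_const (sin φ)).const_mul (r / (2 * γ))).congr_deriv ?_
  field_simp

lemma hasDerivAt_geodesic_y (hγ : γ ≠ 0) (t : ℝ) :
    HasDerivAt (fun t => r / (2 * γ) * (cos φ - cos (2 * γ * t + φ)))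
      (r * sin (2 * γ * t + φ)) t := by
  have hθ : HasDerivAt (fun t => 2 * γ * t + φ) (2 * γ) t := (hasDerivAt_const_mul _).add_const φ
  refine ((hθ.cos.const_sub (cos φ)).const_mul (r / (2 * γ))).congr_deriv ?_
  field_simp

lemma hasDerivAt_geodesic_z (hγ : γ ≠ 0) (t : ℝ) :
    HasDerivAt (fun t => (1 + γ ^ 2) / (2 * γ) * t - (1 - γ ^ 2) / (4 * γ ^ 2) * sin (2 * γ * t))
      ((1 + γ ^ 2) / (2 * γ) - (1 - γ ^ 2) / (2 * γ) * cos (2 * γ * t)) t := by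
  refine ((hasDerivAt_const_mul _).sub
    ((hasDerivAt_const_mul (2 * γ)).sin.const_mul ((1 - γ ^ 2) / (4 * γ ^ 2)))).congr_deriv ?_
  field_simp
  ring

lemma geodesic_vertical_speed (hγ : γ ≠ 0) (hunit : r ^ 2 + γ ^ 2 = 1) (t : ℝ) :
    (1 + γ ^ 2) / (2 * γ) - (1 - γ ^ 2) / (2 * γ) * cos (2 * γ * t)
      + r / (2 * γ) * (cos φ - cos (2 * γ * t + φ)) * (r * cos (2 * γ * t + φ))
      - r / (2 * γ) * (sin (2 * γ * t + φ) - sin φ) * (r * sin (2 * γ * t + φ)) = γ := by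
  rw [sub_eq_iff_eq_add.mp (chord_cross_cos_sin (2 * γ * t) φ).symm]
  generalize cos (2 * γ * t + φ) = c, sin (2 * γ * t + φ) = s
  field_simp
  linear_combination ((cos φ - c) * c - (s - sin φ) * s) * hunit

end HeisenbergGeodesic

/-- The explicit Heisenberg geodesic has unit speed in the left-invariant metric:
    its frame coordinates α = x', β = y', γ̃ = z' + y x' − x y' satisfy
    α² + β² + γ̃² = 1. -/
theorem heis_geodesic_unit_speed (γ r φ : ℝ) (hγ : γ ≠ 0) (hunit : r ^ 2 + γ ^ 2 = 1) :
    let x : ℝ → ℝ := fun t => r / (2 * γ) * (Real.sin (2 * γ * t + φ) - Real.sin φ)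
    let y : ℝ → ℝ := fun t => r / (2 * γ) * (Real.cos φ - Real.cos (2 * γ * t + φ))
    let z : ℝ → ℝ := fun t =>
      (1 + γ ^ 2) / (2 * γ) * t - (1 - γ ^ 2) / (4 * γ ^ 2) * Real.sin (2 * γ * t)
    ∀ t : ℝ,
      (deriv x t) ^ 2 + (deriv y t) ^ 2 +
        (deriv z t + y t * deriv x t - x t * deriv y t) ^ 2 = 1 := by
  intro x y z t
  have hx : HasDerivAt x _ t := hasDerivAt_geodesic_x γ r φ hγ t
  have hy : HasDerivAt y _ t := hasDerivAt_geodesic_y γ r φ hγ t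
  have hz : HasDerivAt z _ t := hasDerivAt_geodesic_z γ hγ t
  have hvert : deriv z t + y t * deriv x t - x t * deriv y t = γ := by
    rw [hx.deriv, hy.deriv, hz.deriv]
    exact geodesic_vertical_speed γ r φ hγ hunit t
  rw [hvert, hx.deriv, hy.deriv]
  linear_combination r ^ 2 * sin_sq_add_cos_sq (2 * γ * t + φ) + hunit
end
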